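/- Let γ: S¹ → S² ⊂ ℝ³ be a smooth embedded loop avoiding the poles (±1, 0, 0) (coordinates (y₁, x₂, y₂), poles on the y₁-axis), and let τ_ε be the rotation by small angle ε about the x₂-axis. If γ = μ is the meridian great circle S² ∩ {y₂ = 0}, then for all sufficiently small ε ≠ 0, the rotated circle τ_ε(μ) is everywhere transverse to the singular foliation G on S² given by the kernel of the restriction of r² dθ = x₂ dy₂ − y₂ dx₂ (whose leaves are the intersections of S² with the half-planes θ = const through the y₁-axis). -/

import Mathlib

noncomputable section

/- Coordinates on `ℝ³` are `(y₁, x₂, y₂) = (p 0, p 1, p 2)`; the poles of `S²` are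
`(±1, 0, 0)` on the `y₁`-axis. -/

/-- The rotation `τ_ε` (by angle `ε` about the `x₂`-axis) of the meridian great circle
`μ(s) = (cos s, sin s, 0) ∈ S² ∩ {y₂ = 0}`. -/
def gam14 (ε s : ℝ) : Fin 3 → ℝ :=
  ![Real.cos s * Real.cos ε, Real.sin s, Real.cos s * Real.sin ε]

/-- The velocity vector of `s ↦ τ_ε(μ(s))`. -/
def gam14' (ε s : ℝ) : Fin 3 → ℝ :=
  ![-(Real.sin s) * Real.cos ε, Real.cos s, -(Real.sin s) * Real.sin ε]

/-- The 1-form `x₂ dy₂ - y₂ dx₂` (`= r² dθ`), whose kernel restricted to `S²` defines the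
singular foliation `G` with leaves the longitudinal arcs `θ = const`. -/
def beta14 (p v : Fin 3 → ℝ) : ℝ := p 1 * v 2 - p 2 * v 1

/-! The rotated meridian is transverse to `G` because `x₂ dy₂ - y₂ dx₂` takes the constant
value `-sin ε` along it. For `0 < |ε| < π` this is nonzero, and since the form vanishes on the
`y₁`-axis, the curve cannot pass through a pole either. -/

theorem Real.sin_ne_zero_of_ne_zero_of_abs_lt_pi {x : ℝ} (hx : x ≠ 0) (hxπ : |x| < Real.pi) :
    Real.sin x ≠ 0 := by
  rw [abs_lt] at hxπ
  rwa [ne_eq, Real.sin_eq_zero_iff_of_lt_of_lt hxπ.1 hxπ.2]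

theorem hasDerivAt_gam14 (ε s : ℝ) :
    HasDerivAt (fun u => gam14 ε u) (gam14' ε s) s := by
  rw [hasDerivAt_pi]
  intro i
  fin_cases i <;> simp only [gam14, gam14', Fin.zero_eta, Fin.mk_one, Fin.reduceFinMk,
    Matrix.cons_val]
  · exact (Real.hasDerivAt_cos s).mul_const _
  · exact Real.hasDerivAt_sin s
  · exact (Real.hasDerivAt_cos s).mul_const _

theorem gam14_sq_sum (ε s : ℝ) :
    gam14 ε s 0 ^ 2 + gam14 ε s 1 ^ 2 + gam14 ε s 2 ^ 2 = 1 := by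
  simp only [gam14, Matrix.cons_val]
  linear_combination Real.cos s ^ 2 * Real.sin_sq_add_cos_sq ε + Real.sin_sq_add_cos_sq s

theorem beta14_gam14 (ε s : ℝ) : beta14 (gam14 ε s) (gam14' ε s) = -Real.sin ε := by
  simp only [beta14, gam14, gam14', Matrix.cons_val]
  linear_combination (-Real.sin ε) * Real.sin_sq_add_cos_sq s

theorem beta14_eq_zero_of_on_y₁_axis {p : Fin 3 → ℝ} (h₁ : p 1 = 0) (h₂ : p 2 = 0)
    (v : Fin 3 → ℝ) : beta14 p v = 0 := by
  simp [beta14, h₁, h₂]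

theorem gam14_ne_of_on_y₁_axis {ε : ℝ} (hε : Real.sin ε ≠ 0) (s : ℝ)
    {p : Fin 3 → ℝ} (h₁ : p 1 = 0) (h₂ : p 2 = 0) : gam14 ε s ≠ p := by
  rintro rfl
  rw [← neg_ne_zero, ← beta14_gam14 ε s] at hε
  exact hε (beta14_eq_zero_of_on_y₁_axis h₁ h₂ _)

/-- for all sufficiently small `ε ≠ 0`, the rotated meridian `τ_ε(μ)` is a
loop on `S²` avoiding the poles `(±1, 0, 0)` and everywhere transverse to the foliation
`G = ker(x₂ dy₂ - y₂ dx₂)|_{S²}`: its velocity vector is never in the kernel of the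
1-form. -/
theorem stmt_14 :
    ∃ ε₀ > (0 : ℝ), ∀ ε : ℝ, ε ≠ 0 → |ε| < ε₀ → ∀ s : ℝ,
      HasDerivAt (fun u => gam14 ε u) (gam14' ε s) s ∧
      (gam14 ε s 0) ^ 2 + (gam14 ε s 1) ^ 2 + (gam14 ε s 2) ^ 2 = 1 ∧
      gam14 ε s ≠ ![1, 0, 0] ∧ gam14 ε s ≠ ![-1, 0, 0] ∧
      beta14 (gam14 ε s) (gam14' ε s) ≠ 0 := by
  refine ⟨Real.pi, Real.pi_pos, fun ε hε hεπ s => ?_⟩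
  have hsin := Real.sin_ne_zero_of_ne_zero_of_abs_lt_pi hε hεπ
  refine ⟨hasDerivAt_gam14 ε s, gam14_sq_sum ε s, ?_, ?_, ?_⟩
  · exact gam14_ne_of_on_y₁_axis hsin s rfl rfl
  · exact gam14_ne_of_on_y₁_axis hsin s rfl rfl
  · rwa [beta14_gam14, neg_ne_zero]

end
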